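/- arXiv:1609.00027 — 2 statements merged into one kernel-verified Lean document; each statement's English description precedes it below -/
import Mathlib

section
/- Let f, g ∈ L¹(ℝ) satisfy ∫_ℝ (1+x²)(|f(x)|² + |g(x)|²) dx < ∞. Then for every N ≥ 1, ∫_ℝ∫_ℝ f(x) ζ_N(1+i(x−y)) conj(g(y)) dx dy = ∑_{n∈ℕ_N} n^{−1} 𝓕f((2π)^{−1} log n) · conj(𝓕g((2π)^{−1} log n)), both the double integral and the series converging absolutely. -/
/-! For `0 < Re s` the truncated Euler product expands into the absolutely convergent series
`ζ_N(s) = ∑_{n ∈ ℕ_N} n^{-s}`. At `s = 1 + i(x - y)` the term `n^{-s}` equals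
`n⁻¹ 𝐞(-xξ) conj 𝐞(-yξ)` with `ξ = log n / 2π`, so its double integral against `f(x) conj g(y)`
is `n⁻¹ 𝓕f(ξ) conj 𝓕g(ξ)`. The double integral of its absolute value is `n⁻¹ ‖f‖₁ ‖g‖₁`, which is
summable over `ℕ_N`, so sum and integral may be interchanged. -/

open MeasureTheory Real Complex

/-- The `k`-th prime (`0`-indexed): `nthPrime 0 = 2`, `nthPrime 1 = 3`, …  -/
noncomputable def nthPrime (k : ℕ) : ℕ := Nat.nth Nat.Prime k

/-- The truncated Euler product `ζ_N(s) = ∏_{k=1}^N (1 − p_k^{−s})⁻¹`. -/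
noncomputable def zetaTrunc (N : ℕ) (s : ℂ) : ℂ :=
  ∏ k ∈ Finset.range N, (1 - (nthPrime k : ℂ) ^ (-s))⁻¹

/-- `n` belongs to `ℕ_N`, i.e. `n ≥ 1` and all prime factors of `n` lie among the
first `N` primes. -/
def memNN (N n : ℕ) : Prop :=
  0 < n ∧ ∀ q : ℕ, q.Prime → q ∣ n → ∃ k < N, q = nthPrime k


open scoped ComplexConjugate FourierTransform

lemma nthPrime_prime (k : ℕ) : (nthPrime k).Prime :=
  Nat.nth_mem_of_infinite Nat.infinite_setOfPred_prime k

lemma nthPrime_strictMono : StrictMono nthPrime :=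
  Nat.nth_strictMono Nat.infinite_setOfPred_prime

lemma nthPrime_lt_nthPrime {j k : ℕ} : nthPrime j < nthPrime k ↔ j < k :=
  nthPrime_strictMono.lt_iff_lt

lemma lt_nthPrime_iff {p : ℕ} (hp : p.Prime) {N : ℕ} :
    p < nthPrime N ↔ ∃ k < N, nthPrime k = p := by
  constructor
  · intro h
    rw [← Nat.nth_count hp] at h
    exact ⟨Nat.count Nat.Prime p, nthPrime_lt_nthPrime.mp h, Nat.nth_count hp⟩
  · rintro ⟨k, hk, rfl⟩
    exact nthPrime_lt_nthPrime.mpr hk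

/-- `Nat.smoothNumbers n` asks for prime factors `< n`, and `nthPrime N` is `p_{N+1}`. -/
lemma memNN_iff_mem_smoothNumbers (N n : ℕ) : memNN N n ↔ n ∈ (nthPrime N).smoothNumbers := by
  rw [Nat.mem_smoothNumbers']
  constructor
  · rintro ⟨-, h⟩ p hp hpn
    obtain ⟨k, hk, rfl⟩ := h p hp hpn
    exact nthPrime_lt_nthPrime.mpr hk
  · intro h
    refine ⟨Nat.pos_of_ne_zero fun hn => ?_, fun q hq hqn => ?_⟩
    · subst hn
      exact (h _ (nthPrime_prime N) (dvd_zero _)).false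
    · obtain ⟨k, hk, rfl⟩ := (lt_nthPrime_iff hq).mp (h q hq hqn)
      exact ⟨k, hk, rfl⟩

lemma primesBelow_nthPrime (N : ℕ) :
    (nthPrime N).primesBelow = (Finset.range N).image nthPrime := by
  ext p
  simp only [Nat.mem_primesBelow, Finset.mem_image, Finset.mem_range]
  constructor
  · rintro ⟨hlt, hp⟩
    exact (lt_nthPrime_iff hp).mp hlt
  · rintro ⟨k, hk, rfl⟩
    exact ⟨nthPrime_lt_nthPrime.mpr hk, nthPrime_prime k⟩

lemma zetaTrunc_eq_prod_primesBelow (N : ℕ) (s : ℂ) :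
    zetaTrunc N s = ∏ p ∈ (nthPrime N).primesBelow, (1 - (p : ℂ) ^ (-s))⁻¹ := by
  rw [primesBelow_nthPrime, Finset.prod_image nthPrime_strictMono.injective.injOn]
  rfl

theorem summable_and_hasSum_zetaTrunc {s : ℂ} (hs : 0 < s.re) (N : ℕ) :
    Summable (fun m : (nthPrime N).smoothNumbers => ‖(m : ℂ) ^ (-s)‖) ∧
      HasSum (fun m : (nthPrime N).smoothNumbers => (m : ℂ) ^ (-s)) (zetaTrunc N s) := by
  have hs0 : s ≠ 0 := fun h => by simp [h] at hs
  rw [zetaTrunc_eq_prod_primesBelow]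
  refine EulerProduct.summable_and_hasSum_smoothNumbers_prod_primesBelow_geometric
    (f := (riemannZetaSummandHom hs0 : ℕ →* ℂ)) (fun {p} hp => ?_) _
  change ‖(p : ℂ) ^ (-s)‖ < 1
  rw [Complex.norm_natCast_cpow_of_pos hp.pos, neg_re]
  exact Real.rpow_lt_one_of_one_lt_of_neg (mod_cast hp.one_lt) (neg_neg_of_pos hs)

lemma natCast_cpow_neg_one_add_mul_I {n : ℕ} (hn : 0 < n) (t : ℝ) :
    (n : ℂ) ^ (-(1 + (t : ℂ) * I)) = (n : ℂ)⁻¹ * 𝐞 (-(t * ((2 * π)⁻¹ * Real.log n))) := by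
  have hn0 : (n : ℂ) ≠ 0 := mod_cast hn.ne'
  rw [neg_add, cpow_add _ _ hn0, cpow_neg_one, cpow_def_of_ne_zero hn0, Real.fourierChar_apply,
    ← natCast_log]
  congr 2
  push_cast
  field_simp

lemma hasSum_zetaTrunc_one_add_mul_I (N : ℕ) (t : ℝ) :
    HasSum (fun m : (nthPrime N).smoothNumbers =>
      ((m : ℕ) : ℂ)⁻¹ * 𝐞 (-(t * ((2 * π)⁻¹ * Real.log (m : ℕ)))))
      (zetaTrunc N (1 + (t : ℂ) * I)) := by
  refine (summable_and_hasSum_zetaTrunc (by simp) N).2.congr_fun fun m => ?_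
  exact (natCast_cpow_neg_one_add_mul_I
    (Nat.pos_of_ne_zero (Nat.ne_zero_of_mem_smoothNumbers m.2)) t).symm

lemma summable_inv_smoothNumbers (N : ℕ) :
    Summable fun m : (nthPrime N).smoothNumbers => ((m : ℕ) : ℝ)⁻¹ := by
  refine (summable_and_hasSum_zetaTrunc (s := 1) one_pos N).1.congr fun m => ?_
  rw [cpow_neg_one, norm_inv, Complex.norm_natCast]

lemma norm_zetaTrunc_one_add_mul_I_le (N : ℕ) (t : ℝ) :
    ‖zetaTrunc N (1 + (t : ℂ) * I)‖ ≤ ∑' m : (nthPrime N).smoothNumbers, ((m : ℕ) : ℝ)⁻¹ :=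
  (hasSum_zetaTrunc_one_add_mul_I N t).norm_le_of_bounded (summable_inv_smoothNumbers N).hasSum
    fun m => by rw [norm_mul, Circle.norm_coe, mul_one, norm_inv, Complex.norm_natCast]

lemma measurable_zetaTrunc_one_add_mul_I (N : ℕ) :
    Measurable fun t : ℝ => zetaTrunc N (1 + (t : ℂ) * I) := by
  unfold zetaTrunc
  fun_prop

lemma integrable_mul_kernel_mul_conj {f g k : ℝ → ℂ} (hf : Integrable f) (hg : Integrable g)
    (hk : Measurable k) {C : ℝ} (hC : ∀ t, ‖k t‖ ≤ C) :
    Integrable fun p : ℝ × ℝ => f p.1 * k (p.1 - p.2) * conj (g p.2) := by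
  rw [Measure.volume_eq_prod]
  refine ((hf.norm.mul_prod hg.norm).const_mul C).mono' ?_ (.of_forall fun p => ?_)
  · exact (hf.1.comp_fst.mul (hk.comp (measurable_fst.sub measurable_snd)).aestronglyMeasurable).mul
      (continuous_star.comp_aestronglyMeasurable hg.1).comp_snd
  · rw [norm_mul, norm_mul, RCLike.norm_conj]
    calc ‖f p.1‖ * ‖k (p.1 - p.2)‖ * ‖g p.2‖ ≤ ‖f p.1‖ * C * ‖g p.2‖ := by gcongr; exact hC _
      _ = C * (‖f p.1‖ * ‖g p.2‖) := by ring

lemma integral_mul_fourierChar_mul_conj (f g : ℝ → ℂ) (w : ℝ) :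
    ∫ p : ℝ × ℝ, f p.1 * 𝐞 (-((p.1 - p.2) * w)) * conj (g p.2) = 𝓕 f w * conj (𝓕 g w) := by
  have he (x y : ℝ) : (𝐞 (-((x - y) * w)) : ℂ) = 𝐞 (-(x * w)) * conj (𝐞 (-(y * w)) : ℂ) := by
    simp only [Real.fourierChar_apply, ← Complex.exp_conj, ← Complex.exp_add, map_mul,
      conj_ofReal, conj_I]
    congr 1
    push_cast
    ring
  have h (p : ℝ × ℝ) : f p.1 * 𝐞 (-((p.1 - p.2) * w)) * conj (g p.2) =
      (𝐞 (-(p.1 * w)) • f p.1) * conj (𝐞 (-(p.2 * w)) • g p.2) := by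
    rw [he, Circle.smul_def, Circle.smul_def, smul_eq_mul, smul_eq_mul, map_mul]
    ring
  simp_rw [h, Real.fourier_real_eq, ← integral_conj]
  rw [Measure.volume_eq_prod]
  exact integral_prod_mul (μ := volume) (ν := volume) (fun x => 𝐞 (-(x * w)) • f x)
    (fun y => conj (𝐞 (-(y * w)) • g y))

theorem summable_and_hasSum_integral_mul_zetaTrunc_mul_conj {f g : ℝ → ℂ} (hf : Integrable f)
    (hg : Integrable g) (N : ℕ) :
    Summable (fun m : (nthPrime N).smoothNumbers =>
      ‖((m : ℕ) : ℂ)⁻¹ * 𝓕 f ((2 * π)⁻¹ * Real.log (m : ℕ)) *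
        conj (𝓕 g ((2 * π)⁻¹ * Real.log (m : ℕ)))‖) ∧
    HasSum (fun m : (nthPrime N).smoothNumbers =>
      ((m : ℕ) : ℂ)⁻¹ * 𝓕 f ((2 * π)⁻¹ * Real.log (m : ℕ)) *
        conj (𝓕 g ((2 * π)⁻¹ * Real.log (m : ℕ))))
      (∫ p : ℝ × ℝ, f p.1 * zetaTrunc N (1 + ((p.1 - p.2 : ℝ) : ℂ) * I) * conj (g p.2)) := by
  let G (m : (nthPrime N).smoothNumbers) (p : ℝ × ℝ) : ℂ :=
    f p.1 * (((m : ℕ) : ℂ)⁻¹ * 𝐞 (-((p.1 - p.2) * ((2 * π)⁻¹ * Real.log (m : ℕ))))) *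
      conj (g p.2)
  have hG_int (m) : Integrable (G m) := by
    have := (integrable_mul_kernel_mul_conj hf hg
      (k := fun t => 𝐞 (-(t * ((2 * π)⁻¹ * Real.log (m : ℕ))))) (by fun_prop)
      fun t => (Circle.norm_coe _).le).const_mul ((m : ℕ) : ℂ)⁻¹
    refine this.congr (.of_forall fun p => ?_)
    simp only [G]
    ring
  have hG_integral (m) : ∫ p, G m p = ((m : ℕ) : ℂ)⁻¹ * 𝓕 f ((2 * π)⁻¹ * Real.log (m : ℕ)) *
      conj (𝓕 g ((2 * π)⁻¹ * Real.log (m : ℕ))) := by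
    rw [mul_assoc, ← integral_mul_fourierChar_mul_conj, ← integral_const_mul]
    congr 1 with p
    simp only [G]
    ring
  have hG_integral_norm (m) :
      ∫ p, ‖G m p‖ = ((m : ℕ) : ℝ)⁻¹ * ((∫ x, ‖f x‖) * ∫ y, ‖g y‖) := by
    have h (p : ℝ × ℝ) : ‖G m p‖ = ((m : ℕ) : ℝ)⁻¹ * (‖f p.1‖ * ‖g p.2‖) := by
      simp only [G, norm_mul, norm_inv, Complex.norm_natCast, Circle.norm_coe, mul_one,
        RCLike.norm_conj]
      ring
    simp_rw [h]
    rw [integral_const_mul, Measure.volume_eq_prod, integral_prod_mul (μ := volume)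
      (ν := volume) (fun x => ‖f x‖) (fun y => ‖g y‖)]
  have hG_summable : Summable fun m => ∫ p, ‖G m p‖ := by
    simp_rw [hG_integral_norm]
    exact (summable_inv_smoothNumbers N).mul_right _
  have hG_hasSum (p : ℝ × ℝ) : HasSum (fun m => G m p)
      (f p.1 * zetaTrunc N (1 + ((p.1 - p.2 : ℝ) : ℂ) * I) * conj (g p.2)) :=
    ((hasSum_zetaTrunc_one_add_mul_I N (p.1 - p.2)).mul_left (f p.1)).mul_right (conj (g p.2))
  simp only [← hG_integral]
  refine ⟨.of_nonneg_of_le (fun _ => norm_nonneg _)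
    (fun m => norm_integral_le_integral_norm _) hG_summable, ?_⟩
  simpa only [(hG_hasSum _).tsum_eq] using
    hasSum_integral_of_summable_integral_norm hG_int hG_summable

theorem statement3_general (f g : ℝ → ℂ) (hf : Integrable f) (hg : Integrable g)
    (N : ℕ) :
    Integrable (fun p : ℝ × ℝ =>
      f p.1 * zetaTrunc N (1 + ((p.1 - p.2 : ℝ) : ℂ) * Complex.I) *
        (starRingEnd ℂ) (g p.2)) ∧
    Summable (fun n : {n : ℕ // memNN N n} =>
      ‖((n : ℕ) : ℂ)⁻¹ *
        FourierTransform.fourier f ((2 * π)⁻¹ * Real.log ((n : ℕ) : ℝ)) *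
        (starRingEnd ℂ) (FourierTransform.fourier g ((2 * π)⁻¹ * Real.log ((n : ℕ) : ℝ)))‖) ∧
    ∫ p : ℝ × ℝ,
        f p.1 * zetaTrunc N (1 + ((p.1 - p.2 : ℝ) : ℂ) * Complex.I) *
          (starRingEnd ℂ) (g p.2) =
      ∑' n : {n : ℕ // memNN N n},
        ((n : ℕ) : ℂ)⁻¹ *
          FourierTransform.fourier f ((2 * π)⁻¹ * Real.log ((n : ℕ) : ℝ)) *
          (starRingEnd ℂ) (FourierTransform.fourier g ((2 * π)⁻¹ * Real.log ((n : ℕ) : ℝ))) := by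
  obtain ⟨h_summable, h_hasSum⟩ := summable_and_hasSum_integral_mul_zetaTrunc_mul_conj hf hg N
  let e : {n : ℕ // memNN N n} ≃ (nthPrime N).smoothNumbers :=
    Equiv.subtypeEquivRight (memNN_iff_mem_smoothNumbers N)
  refine ⟨integrable_mul_kernel_mul_conj (k := fun t : ℝ => zetaTrunc N (1 + (t : ℂ) * I))
      hf hg (measurable_zetaTrunc_one_add_mul_I N) (norm_zetaTrunc_one_add_mul_I_le N), ?_, ?_⟩
  · exact e.summable_iff.mpr h_summable
  · exact (e.hasSum_iff.mpr h_hasSum).tsum_eq.symm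

/-- For `f, g ∈ L¹(ℝ)` with `∫ (1+x²)(|f|²+|g|²) < ∞` and every `N ≥ 1`,
`∫∫ f(x) ζ_N(1+i(x−y)) conj(g(y)) dx dy
  = ∑_{n ∈ ℕ_N} n⁻¹ 𝓕f((2π)⁻¹ log n) conj(𝓕g((2π)⁻¹ log n))`,
with both the double integral and the series converging absolutely. -/
theorem statement3 (f g : ℝ → ℂ) (hf : Integrable f) (hg : Integrable g)
    (hf2 : Integrable fun x : ℝ => (1 + x ^ 2) * ‖f x‖ ^ 2)
    (hg2 : Integrable fun x : ℝ => (1 + x ^ 2) * ‖g x‖ ^ 2)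
    (N : ℕ) (hN : 1 ≤ N) :
    Integrable (fun p : ℝ × ℝ =>
      f p.1 * zetaTrunc N (1 + ((p.1 - p.2 : ℝ) : ℂ) * Complex.I) *
        (starRingEnd ℂ) (g p.2)) ∧
    Summable (fun n : {n : ℕ // memNN N n} =>
      ‖((n : ℕ) : ℂ)⁻¹ *
        FourierTransform.fourier f ((2 * π)⁻¹ * Real.log ((n : ℕ) : ℝ)) *
        (starRingEnd ℂ) (FourierTransform.fourier g ((2 * π)⁻¹ * Real.log ((n : ℕ) : ℝ)))‖) ∧
    ∫ p : ℝ × ℝ,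
        f p.1 * zetaTrunc N (1 + ((p.1 - p.2 : ℝ) : ℂ) * Complex.I) *
          (starRingEnd ℂ) (g p.2) =
      ∑' n : {n : ℕ // memNN N n},
        ((n : ℕ) : ℂ)⁻¹ *
          FourierTransform.fourier f ((2 * π)⁻¹ * Real.log ((n : ℕ) : ℝ)) *
          (starRingEnd ℂ) (FourierTransform.fourier g ((2 * π)⁻¹ * Real.log ((n : ℕ) : ℝ))) :=
  statement3_general f g hf hg N
end

section
/- Let (X,d) be a separable metric space and let μ, ν be Borel probability measures on X. Then for every x₀ ∈ X and every R > 0 there exists a Borel probability measure π on X × X with marginals μ and ν (i.e. π ∘ proj₁^{−1} = μ and π ∘ proj₂^{−1} = ν) such that ∫_{X×X} d(x,y) dπ(x,y) ≤ 4R · |μ−ν|(B(x₀,R)) + 32 ∫_{R/2}^∞ |μ−ν|(X ∖ B(x₀,r)) dr, where |μ−ν| denotes the total variation measure of the signed measure μ−ν and B(x₀,r) the open ball of radius r centered at x₀ (the right-hand side may be infinite). -/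
/-!
By the Hahn decomposition, `μ = ρ₁ + κ` and `ν = ρ₂ + κ` with `ρ₁, ρ₂ ≤ |μ - ν|` of equal mass `t`.
Leave the common part `κ` on the diagonal and couple the rest independently, `t⁻¹ • ρ₁ ⊗ ρ₂`.
Through `x₀`, the triangle inequality bounds the cost by `2 ∫ d(x, x₀) d|μ - ν|`. The layer-cake
formula, with the radial integral split at `R / 2`, bounds this by
`R |μ - ν|(B(x₀, R)) + 4 ∫_{R/2}^∞ |μ - ν|(B(x₀, r)ᶜ) dr`.
-/

open MeasureTheory Set

namespace MeasureTheory.Measure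

variable {α : Type*} [MeasurableSpace α]

theorem le_add_totalVariation (μ ν : Measure α) [IsFiniteMeasure μ] [IsFiniteMeasure ν]
    {A : Set α} (hA : MeasurableSet A) :
    μ A ≤ ν A + (μ.toSignedMeasure - ν.toSignedMeasure).totalVariation A := by
  have h := (μ.toSignedMeasure - ν.toSignedMeasure).norm_le_totalVariation A
  rw [toSignedMeasure_sub_apply hA, Real.norm_eq_abs] at h
  rw [← ENNReal.toReal_le_toReal (measure_ne_top _ _) (by finiteness),
    ENNReal.toReal_add (measure_ne_top _ _) (measure_ne_top _ _)]
  simp only [measureReal_def] at h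
  linarith [le_abs_self ((μ A).toReal - (ν A).toReal)]

theorem totalVariation_sub_comm (μ ν : Measure α) [IsFiniteMeasure μ] [IsFiniteMeasure ν] :
    (ν.toSignedMeasure - μ.toSignedMeasure).totalVariation =
      (μ.toSignedMeasure - ν.toSignedMeasure).totalVariation := by
  rw [← SignedMeasure.totalVariation_neg, neg_sub]

theorem restrict_sub_restrict_le_totalVariation (μ ν : Measure α) [IsFiniteMeasure μ]
    [IsFiniteMeasure ν] {E : Set α} (hE : MeasurableSet E) (hνμ : ν.restrict E ≤ μ.restrict E) :
    μ.restrict E - ν.restrict E ≤ (μ.toSignedMeasure - ν.toSignedMeasure).totalVariation := by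
  refine Measure.le_iff.2 fun A hA => ?_
  rw [sub_apply hA hνμ, restrict_apply hA, restrict_apply hA, tsub_le_iff_left]
  calc μ (A ∩ E) ≤ ν (A ∩ E) + (μ.toSignedMeasure - ν.toSignedMeasure).totalVariation (A ∩ E) :=
        le_add_totalVariation μ ν (hA.inter hE)
    _ ≤ ν (A ∩ E) + (μ.toSignedMeasure - ν.toSignedMeasure).totalVariation A := by
        gcongr; exact inter_subset_left

theorem exists_common_add_le_totalVariation (μ ν : Measure α) [IsFiniteMeasure μ]
    [IsFiniteMeasure ν] :
    ∃ ρ₁ ρ₂ κ : Measure α, μ = ρ₁ + κ ∧ ν = ρ₂ + κ ∧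
      ρ₁ ≤ (μ.toSignedMeasure - ν.toSignedMeasure).totalVariation ∧
      ρ₂ ≤ (μ.toSignedMeasure - ν.toSignedMeasure).totalVariation := by
  obtain ⟨E, hE, hνμ, hμν⟩ := hahn_decomposition μ ν
  have hνμ : ν.restrict E ≤ μ.restrict E := Measure.le_iff.2 fun A hA => by
    rw [restrict_apply hA, restrict_apply hA]; exact hνμ _ (hA.inter hE) inter_subset_right
  have hμν : μ.restrict Eᶜ ≤ ν.restrict Eᶜ := Measure.le_iff.2 fun A hA => by
    rw [restrict_apply hA, restrict_apply hA]; exact hμν _ (hA.inter hE.compl) inter_subset_right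
  refine ⟨μ.restrict E - ν.restrict E, ν.restrict Eᶜ - μ.restrict Eᶜ,
    ν.restrict E + μ.restrict Eᶜ, ?_, ?_,
    restrict_sub_restrict_le_totalVariation μ ν hE hνμ, ?_⟩
  · rw [← add_assoc, sub_add_cancel_of_le hνμ, restrict_add_restrict_compl hE]
  · rw [add_comm (ν.restrict E), ← add_assoc, sub_add_cancel_of_le hμν, add_comm,
      restrict_add_restrict_compl hE]
  · rw [← totalVariation_sub_comm]
    exact restrict_sub_restrict_le_totalVariation ν μ hE.compl hμν

-- For `ρ₁ = 0` the factor is `⊤`, harmlessly: it then multiplies the zero measure.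
noncomputable def productCoupling (ρ₁ ρ₂ : Measure α) : Measure (α × α) :=
  (ρ₁ univ)⁻¹ • ρ₁.prod ρ₂

theorem inv_measure_univ_smul_smul (ρ : Measure α) [IsFiniteMeasure ρ] :
    (ρ univ)⁻¹ • ρ univ • ρ = ρ := by
  rcases eq_zero_or_neZero ρ with rfl | _
  · simp
  · rw [smul_smul, ENNReal.inv_mul_cancel (NeZero.ne _) (measure_ne_top _ _), one_smul]

theorem map_fst_productCoupling {ρ₁ ρ₂ : Measure α} [IsFiniteMeasure ρ₁] [IsFiniteMeasure ρ₂]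
    (h : ρ₁ univ = ρ₂ univ) :
    (productCoupling ρ₁ ρ₂).map Prod.fst = ρ₁ := by
  rw [productCoupling, Measure.map_smul, map_fst_prod, ← h, inv_measure_univ_smul_smul]

theorem map_snd_productCoupling {ρ₁ ρ₂ : Measure α} [IsFiniteMeasure ρ₂]
    (h : ρ₁ univ = ρ₂ univ) :
    (productCoupling ρ₁ ρ₂).map Prod.snd = ρ₂ := by
  rw [productCoupling, Measure.map_smul, map_snd_prod, h, inv_measure_univ_smul_smul]

theorem lintegral_edist_productCoupling_le {β : Type*} [PseudoEMetricSpace β]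
    [MeasurableSpace β] [OpensMeasurableSpace β] {ρ₁ ρ₂ : Measure β} [IsFiniteMeasure ρ₁]
    [IsFiniteMeasure ρ₂] (h : ρ₁ univ = ρ₂ univ) (x₀ : β) :
    ∫⁻ p, edist p.1 p.2 ∂productCoupling ρ₁ ρ₂ ≤
      ∫⁻ x, edist x x₀ ∂ρ₁ + ∫⁻ y, edist x₀ y ∂ρ₂ :=
  calc ∫⁻ p, edist p.1 p.2 ∂productCoupling ρ₁ ρ₂
      ≤ ∫⁻ p, (edist p.1 x₀ + edist x₀ p.2) ∂productCoupling ρ₁ ρ₂ :=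
        lintegral_mono fun p => edist_triangle _ _ _
    _ = ∫⁻ p, edist p.1 x₀ ∂productCoupling ρ₁ ρ₂ + ∫⁻ p, edist x₀ p.2 ∂productCoupling ρ₁ ρ₂ :=
        lintegral_add_left (measurable_edist_left.comp measurable_fst) _
    _ = ∫⁻ x, edist x x₀ ∂ρ₁ + ∫⁻ y, edist x₀ y ∂ρ₂ := by
        rw [← lintegral_map measurable_edist_left measurable_fst,
          ← lintegral_map measurable_edist_right measurable_snd,
          map_fst_productCoupling h, map_snd_productCoupling h]

theorem exists_coupling_lintegral_edist_le {β : Type*} [PseudoEMetricSpace β]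
    [MeasurableSpace β] [OpensMeasurableSpace β] {ρ₁ ρ₂ κ : Measure β} [IsFiniteMeasure ρ₁]
    [IsFiniteMeasure ρ₂] (h : ρ₁ univ = ρ₂ univ) (x₀ : β) :
    ∃ π : Measure (β × β), π.map Prod.fst = ρ₁ + κ ∧ π.map Prod.snd = ρ₂ + κ ∧
      ∫⁻ p, edist p.1 p.2 ∂π ≤ ∫⁻ x, edist x x₀ ∂ρ₁ + ∫⁻ y, edist x₀ y ∂ρ₂ := by
  have hdiag : Measurable fun x : β => (x, x) := measurable_id.prodMk measurable_id
  refine ⟨productCoupling ρ₁ ρ₂ + κ.map fun x => (x, x), ?_, ?_, ?_⟩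
  · rw [Measure.map_add _ _ measurable_fst, map_fst_productCoupling h,
      map_map measurable_fst hdiag]
    exact congrArg (ρ₁ + ·) map_id
  · rw [Measure.map_add _ _ measurable_snd, map_snd_productCoupling h,
      map_map measurable_snd hdiag]
    exact congrArg (ρ₂ + ·) map_id
  · have hdiag_zero : ∫⁻ p, edist p.1 p.2 ∂κ.map (fun x => (x, x)) = 0 :=
      le_antisymm ((lintegral_map_le _ _).trans_eq (by simp)) bot_le
    rw [lintegral_add_measure, hdiag_zero, add_zero]
    exact lintegral_edist_productCoupling_le h x₀

theorem exists_coupling_lintegral_edist_le_two_mul_totalVariation {β : Type*}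
    [PseudoEMetricSpace β] [MeasurableSpace β] [OpensMeasurableSpace β] (μ ν : Measure β)
    [IsFiniteMeasure μ] [IsFiniteMeasure ν] (h : μ univ = ν univ) (x₀ : β) :
    ∃ π : Measure (β × β), π.map Prod.fst = μ ∧ π.map Prod.snd = ν ∧
      ∫⁻ p, edist p.1 p.2 ∂π ≤
        2 * ∫⁻ x, edist x x₀ ∂(μ.toSignedMeasure - ν.toSignedMeasure).totalVariation := by
  obtain ⟨ρ₁, ρ₂, κ, rfl, rfl, hρ₁, hρ₂⟩ := exists_common_add_le_totalVariation μ ν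
  have := isFiniteMeasure_of_le _ hρ₁
  have := isFiniteMeasure_of_le _ hρ₂
  have hκ : κ univ ≠ ⊤ := ne_top_of_le_ne_top (measure_ne_top (ρ₁ + κ) univ) le_add_self
  rw [add_apply, add_apply, ENNReal.add_left_inj hκ] at h
  obtain ⟨π, hfst, hsnd, hcost⟩ := exists_coupling_lintegral_edist_le (κ := κ) h x₀
  refine ⟨π, hfst, hsnd, hcost.trans ?_⟩
  simp_rw [two_mul, edist_comm x₀]
  exact add_le_add (lintegral_mono' hρ₁ le_rfl) (lintegral_mono' hρ₂ le_rfl)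

end MeasureTheory.Measure

open Metric in
theorem MeasureTheory.lintegral_edist_le_measure_ball_add_lintegral_compl_ball {α : Type*}
    [PseudoMetricSpace α] [MeasurableSpace α] [OpensMeasurableSpace α] (σ : Measure α)
    (x₀ : α) (R : ℝ) :
    ∫⁻ x, edist x x₀ ∂σ ≤
      ENNReal.ofReal (R / 2) * σ (ball x₀ R) + 2 * ∫⁻ r in Ici (R / 2), σ (ball x₀ r)ᶜ := by
  set f : ℝ → ENNReal := fun r => σ (ball x₀ r)ᶜ
  have hlayer : ∫⁻ x, edist x x₀ ∂σ = ∫⁻ r in Ioi 0, f r := by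
    simp_rw [edist_dist]
    refine (lintegral_eq_lintegral_meas_le σ (ae_of_all _ fun x => dist_nonneg)
      (continuous_id.dist continuous_const).measurable.aemeasurable).trans ?_
    congr! 3 with r
    ext x; simp
  have hnear : ∫⁻ r in Ioc 0 (R / 2), f r ≤
      ENNReal.ofReal (R / 2) * σ (ball x₀ R) + ENNReal.ofReal (R / 2) * f R :=
    calc ∫⁻ r in Ioc 0 (R / 2), f r ≤ ∫⁻ _ in Ioc 0 (R / 2), (σ (ball x₀ R) + f R) :=
          lintegral_mono fun r => (measure_mono (subset_univ _)).trans
            (measure_univ_le_add_compl _)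
      _ = _ := by rw [setLIntegral_const, Real.volume_Ioc, sub_zero, mul_comm, mul_add]
  have hfar : ENNReal.ofReal (R / 2) * f R ≤ ∫⁻ r in Ici (R / 2), f r :=
    calc ENNReal.ofReal (R / 2) * f R = ∫⁻ _ in Icc (R / 2) R, f R := by
          rw [setLIntegral_const, Real.volume_Icc, sub_half, mul_comm]
      _ ≤ ∫⁻ r in Icc (R / 2) R, f r :=
          setLIntegral_mono' measurableSet_Icc fun r hr =>
            measure_mono (compl_subset_compl.2 (ball_subset_ball hr.2))
      _ ≤ ∫⁻ r in Ici (R / 2), f r := lintegral_mono_set Icc_subset_Ici_self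
  calc ∫⁻ x, edist x x₀ ∂σ = ∫⁻ r in Ioi 0, f r := hlayer
    _ ≤ ∫⁻ r in Ioc 0 (R / 2) ∪ Ici (R / 2), f r :=
        lintegral_mono_set fun r hr => (le_or_gt r (R / 2)).imp (⟨hr, ·⟩) le_of_lt
    _ ≤ (∫⁻ r in Ioc 0 (R / 2), f r) + ∫⁻ r in Ici (R / 2), f r := lintegral_union_le f _ _
    _ ≤ ENNReal.ofReal (R / 2) * σ (ball x₀ R) + 2 * ∫⁻ r in Ici (R / 2), f r := by
        rw [two_mul, ← add_assoc]
        exact add_le_add (hnear.trans (add_le_add le_rfl hfar)) le_rfl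

theorem statement15_general {X : Type*} [MetricSpace X]
    [MeasurableSpace X] [BorelSpace X]
    (μ ν : Measure X) [IsProbabilityMeasure μ] [IsProbabilityMeasure ν]
    (x₀ : X) (R : ℝ) :
    ∃ π : Measure (X × X), IsProbabilityMeasure π ∧
      π.map Prod.fst = μ ∧ π.map Prod.snd = ν ∧
      ∫⁻ p : X × X, edist p.1 p.2 ∂π ≤
        ENNReal.ofReal (4 * R) *
            (μ.toSignedMeasure - ν.toSignedMeasure).totalVariation (Metric.ball x₀ R) +
          32 * ∫⁻ r in Set.Ici (R / 2),
            (μ.toSignedMeasure - ν.toSignedMeasure).totalVariation (Metric.ball x₀ r)ᶜ := by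
  set σ := (μ.toSignedMeasure - ν.toSignedMeasure).totalVariation
  obtain ⟨π, hfst, hsnd, hcost⟩ :=
    Measure.exists_coupling_lintegral_edist_le_two_mul_totalVariation μ ν
      (by simp only [measure_univ]) x₀
  have : IsProbabilityMeasure (π.map Prod.fst) := hfst ▸ inferInstance
  refine ⟨π, Measure.isProbabilityMeasure_of_map Prod.fst, hfst, hsnd, ?_⟩
  calc ∫⁻ p : X × X, edist p.1 p.2 ∂π ≤ 2 * ∫⁻ x, edist x x₀ ∂σ := hcost
    _ ≤ 2 * (ENNReal.ofReal (R / 2) * σ (Metric.ball x₀ R) +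
          2 * ∫⁻ r in Ici (R / 2), σ (Metric.ball x₀ r)ᶜ) := by
        gcongr; exact lintegral_edist_le_measure_ball_add_lintegral_compl_ball σ x₀ R
    _ = ENNReal.ofReal R * σ (Metric.ball x₀ R) +
          4 * ∫⁻ r in Ici (R / 2), σ (Metric.ball x₀ r)ᶜ := by
        rw [mul_add, ← mul_assoc, ← mul_assoc, ← ENNReal.ofReal_ofNat 2,
          ← ENNReal.ofReal_mul zero_le_two, mul_div_cancel₀ R two_ne_zero]
        norm_num
    _ ≤ _ := by
        gcongr ?_ * _ + ?_ * _
        · rcases le_total 0 R with hR | hR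
          · exact ENNReal.ofReal_le_ofReal (by linarith)
          · simp [ENNReal.ofReal_of_nonpos hR]
        · norm_num

/-- Let `(X,d)` be a separable metric space and `μ, ν` Borel probability
measures on `X`.  For every `x₀ ∈ X` and `R > 0` there is a coupling `π` of `μ` and `ν`
with `∫ d(x,y) dπ ≤ 4R |μ−ν|(B(x₀,R)) + 32 ∫_{R/2}^∞ |μ−ν|(X ∖ B(x₀,r)) dr`
(the right-hand side may be infinite). -/
theorem statement15 {X : Type*} [MetricSpace X] [TopologicalSpace.SeparableSpace X]
    [MeasurableSpace X] [BorelSpace X]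
    (μ ν : Measure X) [IsProbabilityMeasure μ] [IsProbabilityMeasure ν]
    (x₀ : X) (R : ℝ) (hR : 0 < R) :
    ∃ π : Measure (X × X), IsProbabilityMeasure π ∧
      π.map Prod.fst = μ ∧ π.map Prod.snd = ν ∧
      ∫⁻ p : X × X, edist p.1 p.2 ∂π ≤
        ENNReal.ofReal (4 * R) *
            (μ.toSignedMeasure - ν.toSignedMeasure).totalVariation (Metric.ball x₀ R) +
          32 * ∫⁻ r in Set.Ici (R / 2),
            (μ.toSignedMeasure - ν.toSignedMeasure).totalVariation (Metric.ball x₀ r)ᶜ :=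
  statement15_general μ ν x₀ R
end
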